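/- arXiv:1601.03714 — 3 statements merged into one kernel-verified Lean document; each statement's English description precedes it below -/
import Mathlib

section
/- Let D = (d_1, ..., d_n) be a degree sequence with all d_i ≥ 1, let n_2 be the number of indices i with d_i = 2, let M = Σ_{i : d_i ≠ 2} d_i, and define R as follows: sort the degrees in nondecreasing order d_{π_1} ≤ ... ≤ d_{π_n}, let j be the least index with Σ_{i=1}^{j} d_{π_i}(d_{π_i} - 2) > 0 (or j = n if no such index exists), and set R = Σ_{i=j}^{n} d_{π_i}. Then R ≥ M - 2(n - n_2). -/
open Finset

open scoped Classical in
/-- `jD n e`: for a nondecreasing degree sequence `e 0 ≤ e 1 ≤ ... ≤ e (n-1)`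
(1-indexed in the paper), the least `j` such that `∑_{i=1}^{j} e_i (e_i - 2) > 0`,
or `n` if no such `j ≤ n` exists. -/
noncomputable def jD (n : ℕ) (e : ℕ → ℤ) : ℕ :=
  if h : ∃ j, j ≤ n ∧ 0 < ∑ i ∈ Finset.range j, e i * (e i - 2) then Nat.find h else n

/-- `RD n e = ∑_{i=jD}^{n} e_i` (1-indexed), i.e. the sum of the sorted degrees
from position `jD n e` to `n`. -/
noncomputable def RD (n : ℕ) (e : ℕ → ℤ) : ℤ :=
  ∑ i ∈ Finset.Ico (jD n e - 1) n, e i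

/-! Since `M - 2(n - n₂) = ∑ᵢ (dᵢ - 2)`, it suffices to split this sum at position `j - 1` of the
sorted sequence. On integers `x - 2 ≤ x (x - 2)`, because `(x - 1)(x - 2) ≥ 0` (the convexity of
`x ↦ x (x - 2)` at integer points), so by the minimality of `j` the part before `j - 1` is
nonpositive, while the part from `j - 1` on is at most `R`. -/

theorem Int.sub_two_le_mul_sub_two (x : ℤ) : x - 2 ≤ x * (x - 2) := by
  rcases le_or_gt x 1 with hx | hx <;> nlinarith

theorem jD_le (n : ℕ) (e : ℕ → ℤ) : jD n e ≤ n := by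
  rw [jD]
  split_ifs with h
  · exact (Nat.find_spec h).1
  · exact le_rfl

theorem sum_range_jD_sub_one_nonpos (n : ℕ) (e : ℕ → ℤ) :
    ∑ i ∈ range (jD n e - 1), e i * (e i - 2) ≤ 0 := by
  rw [jD]
  split_ifs with h
  · rcases Nat.eq_zero_or_pos (Nat.find h) with h0 | hpos
    · simp [h0]
    · have hmin := Nat.find_min h (Nat.sub_lt hpos one_pos)
      push Not at hmin
      exact hmin ((Nat.sub_le _ _).trans (Nat.find_spec h).1)
  · push Not at h
    exact h _ (Nat.sub_le _ _)

theorem sum_range_sub_two_le_RD (n : ℕ) (e : ℕ → ℤ) : ∑ i ∈ range n, (e i - 2) ≤ RD n e := by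
  have hj : jD n e - 1 ≤ n := (Nat.sub_le _ _).trans (jD_le n e)
  have hprefix : ∑ i ∈ range (jD n e - 1), (e i - 2) ≤ 0 :=
    (sum_le_sum fun i _ => (e i).sub_two_le_mul_sub_two).trans (sum_range_jD_sub_one_nonpos n e)
  have hsuffix : ∑ i ∈ Ico (jD n e - 1) n, (e i - 2) ≤ RD n e :=
    sum_le_sum fun i _ => by linarith
  rw [← sum_range_add_sum_Ico _ hj]
  linarith

theorem sum_ite_ne_two_sub_two_mul_card {ι : Type*} [Fintype ι] (d : ι → ℕ) :
    (∑ i, if d i ≠ 2 then (d i : ℤ) else 0) -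
        2 * ((Fintype.card ι : ℤ) - ((univ.filter fun i => d i = 2).card : ℤ)) =
      ∑ i, ((d i : ℤ) - 2) := by
  have hpt : ∀ i,
      (d i : ℤ) - 2 = (if d i ≠ 2 then (d i : ℤ) else 0) - 2 + if d i = 2 then 2 else 0 := by
    intro i
    by_cases h : d i = 2 <;> simp [h]
  simp only [hpt, sum_add_distrib, sum_sub_distrib, ← sum_filter, sum_const, card_univ,
    nsmul_eq_mul]
  ring

theorem sum_comp_eq_of_map_eq {ι κ α M : Type*} [AddCommMonoid M] {s : Finset ι} {t : Finset κ}
    {f : ι → α} {e : κ → α} (h : s.val.map f = t.val.map e) (g : α → M) :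
    ∑ i ∈ s, g (f i) = ∑ i ∈ t, g (e i) := by
  calc ∑ i ∈ s, g (f i) = ((s.val.map f).map g).sum := by rw [Multiset.map_map]; rfl
    _ = ((t.val.map e).map g).sum := by rw [h]
    _ = ∑ i ∈ t, g (e i) := by rw [Multiset.map_map]; rfl

theorem stmt5_general (n : ℕ) (d : Fin n → ℕ) (e : ℕ → ℤ)
    (hperm : Multiset.map (fun i => (d i : ℤ)) Finset.univ.val =
      Multiset.map e (Finset.range n).val) :
    (∑ i, if d i ≠ 2 then (d i : ℤ) else 0) -
        2 * ((n : ℤ) - ((Finset.univ.filter fun i => d i = 2).card : ℤ)) ≤ RD n e := by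
  calc (∑ i, if d i ≠ 2 then (d i : ℤ) else 0) -
        2 * ((n : ℤ) - ((Finset.univ.filter fun i => d i = 2).card : ℤ))
      = ∑ i, ((d i : ℤ) - 2) := by
        simpa only [Fintype.card_fin] using sum_ite_ne_two_sub_two_mul_card d
    _ = ∑ i ∈ range n, (e i - 2) := sum_comp_eq_of_map_eq hperm (· - 2)
    _ ≤ RD n e := sum_range_sub_two_le_RD n e

theorem stmt5 (n : ℕ) (d : Fin n → ℕ) (hd : ∀ i, 1 ≤ d i) (e : ℕ → ℤ)
    (hperm : Multiset.map (fun i => (d i : ℤ)) Finset.univ.val =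
      Multiset.map e (Finset.range n).val)
    (hmono : ∀ i j : ℕ, i ≤ j → j < n → e i ≤ e j) :
    (∑ i, if d i ≠ 2 then (d i : ℤ) else 0) -
        2 * ((n : ℤ) - ((Finset.univ.filter fun i => d i = 2).card : ℤ)) ≤ RD n e :=
  stmt5_general n d e hperm
end

section
/- Let D = (d_1, ..., d_n) be a degree sequence with all d_i ≥ 1, sorted as d_{π_1} ≤ ... ≤ d_{π_n}. Let j_D be the least j with Σ_{i=1}^{j} d_{π_i}(d_{π_i} - 2) > 0 (or n if no such j exists), R = Σ_{i=j_D}^{n} d_{π_i}, and M = Σ_{i : d_i ≠ 2} d_i. If R ≤ ωM for some ω with 0 < ω < 1, then the number n_1 of indices i with d_i = 1 satisfies n_1 ≥ (1 - ω)M/2. -/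
open Finset

theorem stmt6 (n : ℕ) (d : Fin n → ℕ) (hd : ∀ i, 1 ≤ d i) (e : ℕ → ℤ)
    (hperm : Multiset.map (fun i => (d i : ℤ)) Finset.univ.val =
      Multiset.map e (Finset.range n).val)
    (hmono : ∀ i j : ℕ, i ≤ j → j < n → e i ≤ e j)
    (ω : ℝ) (hω0 : 0 < ω) (hω1 : ω < 1)
    (hR : (RD n e : ℝ) ≤ ω * ((∑ i, if d i ≠ 2 then (d i : ℤ) else 0 : ℤ) : ℝ)) :
    (1 - ω) * ((∑ i, if d i ≠ 2 then (d i : ℤ) else 0 : ℤ) : ℝ) / 2 ≤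
      ((Finset.univ.filter fun i => d i = 1).card : ℝ) := by
  classical
  -- transfer sums via the multiset equality
  have hsum : ∀ f : ℤ → ℤ,
      (∑ i, f ((d i : ℤ))) = ∑ i ∈ Finset.range n, f (e i) := by
    intro f
    have h1 : (∑ i, f ((d i : ℤ)))
        = (Multiset.map f (Multiset.map (fun i => (d i : ℤ)) Finset.univ.val)).sum := by
      rw [Multiset.map_map]; rfl
    have h2 : (∑ i ∈ Finset.range n, f (e i))
        = (Multiset.map f (Multiset.map e (Finset.range n).val)).sum := by
      rw [Multiset.map_map]; rfl
    rw [h1, h2, hperm]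
  have he : ∀ i, i < n → 1 ≤ e i := by
    intro i hi
    have hmem : e i ∈ Multiset.map e (Finset.range n).val :=
      Multiset.mem_map_of_mem e (by simpa using hi)
    rw [← hperm] at hmem
    obtain ⟨j, -, hj⟩ := Multiset.mem_map.mp hmem
    rw [← hj]
    exact_mod_cast hd j
  -- abbreviations
  set S : ℤ := ∑ i, if d i ≠ 2 then (d i : ℤ) else 0 with hSdef
  set N1 : ℕ := (Finset.univ.filter fun i => d i = 1).card with hN1def
  have hSe : S = ∑ i ∈ Finset.range n, (if e i ≠ 2 then e i else 0) := by
    rw [hSdef, ← hsum (fun x => if x ≠ 2 then x else 0)]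
    refine Finset.sum_congr rfl fun i _ => ?_
    by_cases h : d i = 2
    · simp [h]
    · have h' : ((d i : ℤ)) ≠ 2 := by exact_mod_cast h
      simp [h, h']
  have hN1e : (N1 : ℤ) = ∑ i ∈ Finset.range n, (if e i = 1 then 1 else 0) := by
    rw [hN1def, ← hsum (fun x => if x = 1 then 1 else 0)]
    rw [Finset.card_filter]
    push_cast
    refine Finset.sum_congr rfl fun i _ => ?_
    by_cases h : d i = 1 <;> simp [h]
  -- j_D facts
  have hjle : jD n e ≤ n := by
    unfold jD
    split
    · rename_i h; exact (Nat.find_spec h).1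
    · exact le_rfl
  have hjn : jD n e - 1 ≤ n := le_trans (Nat.sub_le _ _) hjle
  have hkey : ∑ i ∈ Finset.range (jD n e - 1), e i * (e i - 2) ≤ 0 := by
    unfold jD
    split
    · rename_i h
      rcases Nat.eq_zero_or_pos (Nat.find h) with h0 | h0
      · simp [h0]
      · have hlt : Nat.find h - 1 < Nat.find h := by omega
        have := Nat.find_min h hlt
        push_neg at this
        exact this (le_trans (Nat.sub_le _ _) (Nat.find_spec h).1)
    · rename_i h
      push_neg at h
      exact h (n - 1) (Nat.sub_le _ _)
  -- main integer inequality : S ≤ 2 * N1 + RD n e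
  have hA : ∑ i ∈ Finset.range (jD n e - 1), (if e i ≠ 2 then e i else 0)
      ≤ ∑ i ∈ Finset.range (jD n e - 1),
          (e i * (e i - 2) + 2 * (if e i = 1 then 1 else 0)) := by
    refine Finset.sum_le_sum fun i hi => ?_
    have h1 : 1 ≤ e i := he i (lt_of_lt_of_le (Finset.mem_range.mp hi) hjn)
    by_cases h2 : e i = 2
    · simp [h2]
    · by_cases h3 : e i = 1
      · simp [h3]
      · have h4 : 3 ≤ e i := by omega
        rw [if_pos h2, if_neg h3]
        nlinarith
  have hAsplit : ∑ i ∈ Finset.range (jD n e - 1),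
        (e i * (e i - 2) + 2 * (if e i = 1 then 1 else 0))
      = (∑ i ∈ Finset.range (jD n e - 1), e i * (e i - 2))
        + 2 * ∑ i ∈ Finset.range (jD n e - 1), (if e i = 1 then 1 else 0) := by
    rw [Finset.sum_add_distrib, Finset.mul_sum]
  have hind : ∑ i ∈ Finset.range (jD n e - 1), (if e i = 1 then 1 else 0)
      ≤ ∑ i ∈ Finset.range n, (if e i = 1 then (1 : ℤ) else 0) := by
    refine Finset.sum_le_sum_of_subset_of_nonneg
      (Finset.range_subset_range.mpr hjn) fun i _ _ => ?_
    split <;> norm_num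
  have hB : ∑ i ∈ Finset.Ico (jD n e - 1) n, (if e i ≠ 2 then e i else 0)
      ≤ RD n e := by
    unfold RD
    refine Finset.sum_le_sum fun i hi => ?_
    have h1 : 1 ≤ e i := he i (Finset.mem_Ico.mp hi).2
    split <;> omega
  have hScomb : S = (∑ i ∈ Finset.range (jD n e - 1), (if e i ≠ 2 then e i else 0))
      + ∑ i ∈ Finset.Ico (jD n e - 1) n, (if e i ≠ 2 then e i else 0) := by
    rw [hSe, Finset.sum_range_add_sum_Ico _ hjn]
  have main : S ≤ 2 * (N1 : ℤ) + RD n e := by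
    rw [hN1e]
    calc S = _ + _ := hScomb
    _ ≤ (∑ i ∈ Finset.range (jD n e - 1),
          (e i * (e i - 2) + 2 * (if e i = 1 then 1 else 0))) + RD n e := by
        exact add_le_add hA hB
    _ = ((∑ i ∈ Finset.range (jD n e - 1), e i * (e i - 2))
          + 2 * ∑ i ∈ Finset.range (jD n e - 1), (if e i = 1 then 1 else 0)) + RD n e := by
        rw [hAsplit]
    _ ≤ (0 + 2 * ∑ i ∈ Finset.range n, (if e i = 1 then (1:ℤ) else 0)) + RD n e := by
        gcongr
    _ = 2 * (∑ i ∈ Finset.range n, (if e i = 1 then (1:ℤ) else 0)) + RD n e := by ring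
  -- conclude over ℝ
  have mainR : (S : ℝ) ≤ 2 * (N1 : ℝ) + (RD n e : ℝ) := by exact_mod_cast main
  linarith
end

section
/- Let β_0 be a real number with ζ(β_0 - 2) = 2ζ(β_0 - 1), where ζ is the Riemann zeta function restricted to real arguments greater than 1. Then for all real β > β_0 (with β - 2 > 1), Σ_{i=1}^{∞} i(i-2) i^{-β} < 0, and for all real β with 3 < β < β_0, Σ_{i=1}^{∞} i(i-2) i^{-β} > 0. -/
/-- The Riemann zeta function restricted to real arguments:
`zetaReal x = ∑_{i ≥ 1} i^{-x}`. -/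
noncomputable def zetaReal (x : ℝ) : ℝ := ∑' i : ℕ, ((i : ℝ) + 1) ^ (-x)

/-- `Qsum β = ∑_{i ≥ 1} i (i - 2) i^{-β}`. -/
noncomputable def Qsum (β : ℝ) : ℝ :=
  ∑' i : ℕ, ((i : ℝ) + 1) * (((i : ℝ) + 1) - 2) * ((i : ℝ) + 1) ^ (-β)

/-! The summand splits as `i (i - 2) i^{-β} = i^{-(β-2)} - 2 i^{-(β-1)}`, so
`Qsum β = ζ(β - 2) - 2 ζ(β - 1)` vanishes at `β₀`. Each summand is non-increasing in `β`
(the `i = 1` summand is constant and `i (i - 2) ≥ 0` for `i ≥ 2`) and the `i = 3` summand is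
strictly decreasing, so `Qsum` is strictly decreasing on `(3, ∞)` and changes sign at `β₀`. -/

open Real

lemma summable_nat_add_one_rpow {p : ℝ} :
    Summable (fun i : ℕ => ((i : ℝ) + 1) ^ p) ↔ p < -1 := by
  rw [← Real.summable_nat_rpow, ← summable_nat_add_iff (f := fun n : ℕ => (n : ℝ) ^ p) 1]
  simp only [Nat.cast_add, Nat.cast_one]

lemma mul_sub_two_mul_rpow_neg {x : ℝ} (hx : 0 < x) (β : ℝ) :
    x * (x - 2) * x ^ (-β) = x ^ (-(β - 2)) - 2 * x ^ (-(β - 1)) := by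
  rw [show -(β - 2) = 1 + (1 + -β) by ring, show -(β - 1) = 1 + -β by ring,
    rpow_add hx, rpow_add hx, rpow_one]
  ring

lemma mul_sub_two_mul_rpow_neg_le_of_le {x : ℝ} (hx : x = 1 ∨ 2 ≤ x) {a b : ℝ} (hab : a ≤ b) :
    x * (x - 2) * x ^ (-b) ≤ x * (x - 2) * x ^ (-a) := by
  rcases hx with rfl | hx
  · simp only [one_rpow, le_refl]
  · exact mul_le_mul_of_nonneg_left (rpow_le_rpow_of_exponent_le (by linarith) (by linarith))
      (mul_nonneg (by linarith) (by linarith))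

lemma summable_Qsum_terms {β : ℝ} (hβ : 3 < β) :
    Summable (fun i : ℕ => ((i : ℝ) + 1) * (((i : ℝ) + 1) - 2) * ((i : ℝ) + 1) ^ (-β)) := by
  simp only [mul_sub_two_mul_rpow_neg (Nat.cast_add_one_pos _)]
  exact (summable_nat_add_one_rpow.mpr (by linarith)).sub
    ((summable_nat_add_one_rpow.mpr (by linarith)).mul_left 2)

lemma Qsum_eq_zetaReal_sub {β : ℝ} (hβ : 3 < β) :
    Qsum β = zetaReal (β - 2) - 2 * zetaReal (β - 1) := by
  unfold Qsum zetaReal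
  simp only [mul_sub_two_mul_rpow_neg (Nat.cast_add_one_pos _)]
  rw [Summable.tsum_sub (summable_nat_add_one_rpow.mpr (by linarith))
      ((summable_nat_add_one_rpow.mpr (by linarith)).mul_left 2), tsum_mul_left]

lemma Qsum_strictAntiOn : StrictAntiOn Qsum (Set.Ioi 3) := by
  intro a ha b hb hab
  refine Summable.tsum_lt_tsum (i := 2) (fun i => ?_) ?_ (summable_Qsum_terms hb)
    (summable_Qsum_terms ha)
  · refine mul_sub_two_mul_rpow_neg_le_of_le ?_ hab.le
    rcases i with _ | i
    · simp
    · right; push_cast; linarith [i.cast_nonneg (α := ℝ)]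
  · norm_num [hab]

theorem stmt11 (β0 : ℝ) (h3 : 3 < β0)
    (hroot : zetaReal (β0 - 2) = 2 * zetaReal (β0 - 1)) :
    (∀ β : ℝ, β0 < β → Qsum β < 0) ∧
    (∀ β : ℝ, 3 < β → β < β0 → 0 < Qsum β) := by
  have hzero : Qsum β0 = 0 := by rw [Qsum_eq_zetaReal_sub h3, hroot, sub_self]
  refine ⟨fun β hβ => ?_, fun β hβ3 hβ => ?_⟩
  · simpa [hzero] using Qsum_strictAntiOn h3 (h3.trans hβ : 3 < β) hβ
  · simpa [hzero] using Qsum_strictAntiOn hβ3 h3 hβ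
end
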